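/- Let n be a positive integer, Y_1, …, Y_n ∈ ℝ, γ > 0, and let a be a positive integer. Define the empirical characteristic function φ_n(t) = (1/n) Σ_{j=1}^n exp(i t Y_j), the weight w(t) = exp(−γ t²), I_w(x) = √(π/γ) exp(−x²/(4γ)), and the statistic Δ_n(a,γ) = n ∫_ℝ |φ_n(t)^a − φ_n(t a)|² w(t) dt. Then Δ_n(a,γ) = n^{−(2a−1)} Σ_{j_1,…,j_{2a}=1}^n I_w( Y_{j_1} + ⋯ + Y_{j_a} − Y_{j_{a+1}} − ⋯ − Y_{j_{2a}} ) + n^{−1} Σ_{j_1,j_2=1}^n I_w( a(Y_{j_1} − Y_{j_2}) ) − 2 n^{−a} Σ_{j_1,…,j_{a+1}=1}^n I_w( Y_{j_1} + ⋯ + Y_{j_a} − a Y_{j_{a+1}} ). -/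

import Mathlib

/-!
`φ_n(t)^a - φ_n(t a)` is a trigonometric polynomial `∑ₖ cₖ e^{i t xₖ}` with real coefficients:
the frequencies are the `a`-fold sums `Y_{j₁} + ⋯ + Y_{jₐ}` with weight `n⁻ᵃ` and the points `a Y_m`
with weight `-n⁻¹`. Its squared modulus is `∑ₖ ∑ₗ cₖ cₗ e^{i t (xₖ - xₗ)}`, and integrating each
exponential against the Gaussian weight gives `I_w(xₖ - xₗ)` (the Fourier transform of a
Gaussian). Since `I_w` is even, the two mixed blocks of the double sum coincide.
-/

open Real Complex Finset
open MeasureTheory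

section GaussianWeight

variable {γ : ℝ}

lemma integrable_cexp_mul_gaussian (hγ : 0 < γ) (x : ℝ) :
    Integrable fun t : ℝ => cexp (I * t * x) * (rexp (-γ * t ^ 2) : ℂ) := by
  refine (integrable_cexp_quadratic (b := γ) (by simpa using hγ) (I * x) 0).congr
    (.of_forall fun t => ?_)
  simp only [ofReal_exp, ← Complex.exp_add]
  push_cast
  ring_nf

lemma integral_cexp_mul_gaussian (hγ : 0 < γ) (x : ℝ) :
    ∫ t : ℝ, cexp (I * t * x) * (rexp (-γ * t ^ 2) : ℂ) =
      (√(π / γ) * rexp (-x ^ 2 / (4 * γ)) : ℝ) := by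
  have h := fourierIntegral_gaussian (b := γ) (by simpa using hγ) x
  push_cast
  rw [Real.sqrt_eq_rpow, ofReal_cpow (by positivity)]
  convert h using 3 <;> push_cast <;> ring_nf

lemma ofReal_sq_norm_sum_mul_cexp {ι : Type*} [Fintype ι] (c x : ι → ℝ) (t : ℝ) :
    ((‖∑ k, (c k : ℂ) * cexp (I * t * x k)‖ ^ 2 : ℝ) : ℂ) =
      ∑ k, ∑ l, ((c k * c l : ℝ) : ℂ) * cexp (I * t * (x k - x l : ℝ)) := by
  rw [← normSq_eq_norm_sq, ← mul_conj, map_sum, sum_mul_sum]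
  refine sum_congr rfl fun k _ => sum_congr rfl fun l _ => ?_
  rw [map_mul, conj_ofReal, ← exp_conj, mul_mul_mul_comm, ← Complex.exp_add]
  push_cast
  simp only [map_mul, conj_I, conj_ofReal]
  ring_nf

theorem integral_sq_norm_sum_mul_cexp_mul_gaussian {ι : Type*} [Fintype ι] (hγ : 0 < γ)
    (c x : ι → ℝ) :
    ∫ t : ℝ, ‖∑ k, (c k : ℂ) * cexp (I * t * x k)‖ ^ 2 * rexp (-γ * t ^ 2) =
      ∑ k, ∑ l, c k * c l * (√(π / γ) * rexp (-(x k - x l) ^ 2 / (4 * γ))) := by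
  apply ofReal_injective
  rw [← integral_complex_ofReal]
  simp_rw [ofReal_mul, ofReal_sq_norm_sum_mul_cexp, sum_mul, mul_assoc (ofReal _)]
  rw [integral_finsetSum _ fun k _ => integrable_finsetSum _ fun l _ =>
    (integrable_cexp_mul_gaussian hγ _).const_mul _, ofReal_sum]
  refine sum_congr rfl fun k _ => ?_
  rw [integral_finsetSum _ fun l _ => (integrable_cexp_mul_gaussian hγ _).const_mul _, ofReal_sum]
  refine sum_congr rfl fun l _ => ?_
  rw [integral_const_mul, integral_cexp_mul_gaussian hγ]
  push_cast
  ring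

end GaussianWeight

lemma sum_cexp_pow {ι : Type*} [Fintype ι] (y : ι → ℝ) (t : ℝ) (a : ℕ) :
    (∑ m, cexp (I * t * y m)) ^ a = ∑ j : Fin a → ι, cexp (I * t * ∑ i, y (j i)) := by
  rw [Fintype.sum_pow]
  refine sum_congr rfl fun j _ => ?_
  rw [← Complex.exp_sum]
  push_cast
  rw [mul_sum]

lemma quadratic_form_sum_elim_const_of_even {ι κ : Type*} [Fintype ι] [Fintype κ] {K : ℝ → ℝ}
    (hK : ∀ z, K (-z) = K z) (p q : ℝ) (u : ι → ℝ) (v : κ → ℝ) :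
    ∑ k, ∑ l, Sum.elim (fun _ => p) (fun _ => q) k * Sum.elim (fun _ => p) (fun _ => q) l *
        K (Sum.elim u v k - Sum.elim u v l) =
      p ^ 2 * ∑ i, ∑ i', K (u i - u i') + q ^ 2 * ∑ m, ∑ m', K (v m - v m') +
        2 * p * q * ∑ i, ∑ m, K (u i - v m) := by
  have hswap : ∑ m, ∑ i, K (v m - u i) = ∑ i, ∑ m, K (u i - v m) := by
    rw [sum_comm]
    simp only [← hK (u _ - v _), neg_sub]
  simp only [Fintype.sum_sum_type, Sum.elim_inl, Sum.elim_inr, ← mul_sum, sum_add_distrib]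
  rw [hswap]
  ring

theorem test_statistic_computational_formula (n : ℕ) (hn : 0 < n) (Y : Fin n → ℝ)
    (γ : ℝ) (hγ : 0 < γ) (a : ℕ) (ha : 0 < a) :
    let φn : ℝ → ℂ := fun s =>
      (n : ℂ)⁻¹ * ∑ j : Fin n, Complex.exp (Complex.I * s * (Y j))
    let Iw : ℝ → ℝ := fun x => Real.sqrt (π / γ) * Real.exp (-x ^ 2 / (4 * γ))
    (n : ℝ) * ∫ t : ℝ, ‖φn t ^ a - φn (t * a)‖ ^ 2 * Real.exp (-γ * t ^ 2) =
      ((n : ℝ) ^ (2 * a - 1))⁻¹ *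
          ∑ j : Fin a → Fin n, ∑ k : Fin a → Fin n,
            Iw ((∑ i : Fin a, Y (j i)) - ∑ i : Fin a, Y (k i)) +
        (n : ℝ)⁻¹ *
          ∑ j₁ : Fin n, ∑ j₂ : Fin n, Iw ((a : ℝ) * (Y j₁ - Y j₂)) -
        2 * ((n : ℝ) ^ a)⁻¹ *
          ∑ j : Fin a → Fin n, ∑ m : Fin n,
            Iw ((∑ i : Fin a, Y (j i)) - (a : ℝ) * Y m) := by
  intro φn Iw
  let c : (Fin a → Fin n) ⊕ Fin n → ℝ := Sum.elim (fun _ => ((n : ℝ) ^ a)⁻¹) fun _ => -(n : ℝ)⁻¹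
  let x : (Fin a → Fin n) ⊕ Fin n → ℝ := Sum.elim (fun j => ∑ i, Y (j i)) fun m => a * Y m
  have hdiff (t : ℝ) : φn t ^ a - φn (t * a) = ∑ k, (c k : ℂ) * cexp (I * t * x k) := by
    simp only [φn, c, x, Fintype.sum_sum_type, Sum.elim_inl, Sum.elim_inr, mul_pow, inv_pow,
      sum_cexp_pow, ← mul_sum]
    push_cast
    ring_nf
  have hIw (z : ℝ) : Iw (-z) = Iw z := by simp only [Iw, neg_sq]
  simp_rw [hdiff]
  rw [integral_sq_norm_sum_mul_cexp_mul_gaussian hγ, quadratic_form_sum_elim_const_of_even hIw]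
  have hn0 : (n : ℝ) ≠ 0 := Nat.cast_ne_zero.mpr hn.ne'
  have hpow : (n : ℝ) ^ (2 * a - 1) = n ^ (2 * a) / n := by
    rw [eq_div_iff hn0, ← pow_succ, Nat.sub_add_cancel (by omega)]
  rw [hpow]
  field_simp
  ring
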